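/- arXiv:2404.05456 — 4 statements merged into one kernel-verified Lean document; each statement's English description precedes it below -/
import Mathlib

section
/- Let d ≥ 1 be an integer and p > 1. Let V, W : ℝ^d → ℝ be positive functions of class C^{1,1}_loc, bounded below by a positive constant, such that x ↦ V(x)^{-d} and y ↦ W(y)^{-d} are probability densities on ℝ^d. Assume that V^{1/p} is globally Lipschitz, that liminf_{|y|→∞} W(y)/|y|^p > 0, and that liminf_{|y|→∞} (∇W(y)·y)/W(y) > 1. Let φ : ℝ^d → ℝ be a convex function of class C¹ such that the pushforward of the measure V(x)^{-d} dx under ∇φ equals the measure W(y)^{-d} dy. Then there exists a constant C > 0 such that |∇φ(x)| ≤ C(1 + |x|) for all x ∈ ℝ^d. -/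
open MeasureTheory Filter Module Metric
open scoped RealInnerProductSpace ENNReal NNReal

/-!
The gradient of a convex function is a monotone operator, so if `M = ‖∇φ x‖` is large then
`‖∇φ‖ ≥ M / 3` on the ball of radius `r = 1 + ‖x‖` centred at `x + (2r / M) ∇φ x`. Since
`V^{1/p}` is Lipschitz, `V ≲ r^p` on that ball, whose `V^{-d}`-mass is therefore at least
`c r^{d - pd}`. By the pushforward, this mass is at most the `W^{-d}`-mass of `{‖y‖ ≥ M / 3}`,
which the growth `W ≳ ‖y‖^p` bounds by `C M^{d - pd}`. As `pd > d`, this forces `M ≲ r`.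
-/

section MonotoneOperator

variable {E : Type*} [NormedAddCommGroup E] [InnerProductSpace ℝ E]

def IsMonotoneOperator (T : E → E) : Prop :=
  ∀ x z, 0 ≤ ⟪T z - T x, z - x⟫

theorem ConvexOn.isMonotoneOperator_gradient [CompleteSpace E] {φ : E → ℝ}
    (hφ : ConvexOn ℝ Set.univ φ) (hφd : Differentiable ℝ φ) :
    IsMonotoneOperator (gradient φ) := by
  intro x z
  have hderiv (t : ℝ) : HasDerivAt (φ ∘ AffineMap.lineMap x z)
      ⟪gradient φ (AffineMap.lineMap x z t), z - x⟫ t := by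
    rw [inner_gradient_left]
    exact (hφd _).hasFDerivAt.comp_hasDerivAt t AffineMap.hasDerivAt_lineMap
  have hmono := (hφ.comp_affineMap (AffineMap.lineMap x z)).monotoneOn_deriv
    (fun t _ => (hderiv t).differentiableAt) (Set.mem_univ 0) (Set.mem_univ 1) zero_le_one
  rw [(hderiv 0).deriv, (hderiv 1).deriv, AffineMap.lineMap_apply_zero,
    AffineMap.lineMap_apply_one] at hmono
  rwa [inner_sub_left, sub_nonneg]

theorem IsMonotoneOperator.norm_le_three_mul_norm {T : E → E} (hT : IsMonotoneOperator T)
    {x z : E} {ρ : ℝ} (hx : T x ≠ 0) (hz : z ∈ ball (x + (2 * ρ / ‖T x‖) • T x) ρ) :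
    ‖T x‖ ≤ 3 * ‖T z‖ := by
  set M := ‖T x‖
  have hM : 0 < M := norm_pos_iff.mpr hx
  set w := z - (x + (2 * ρ / M) • T x)
  have hw : ‖w‖ < ρ := by rwa [mem_ball, dist_eq_norm] at hz
  have hρ : 0 < ρ := (norm_nonneg w).trans_lt hw
  have hzx : z - x = (2 * ρ / M) • T x + w := by simp only [w]; abel
  have hlower : ρ * M ≤ ⟪T x, z - x⟫ := by
    have : -(M * ‖w‖) ≤ ⟪T x, w⟫ := by
      simpa using neg_le_of_abs_le (abs_real_inner_le_norm (T x) w)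
    rw [hzx, inner_add_right, real_inner_smul_right, real_inner_self_eq_norm_mul_norm]
    have : 2 * ρ / M * (M * M) = 2 * ρ * M := by field_simp
    nlinarith
  have hdist : ‖z - x‖ ≤ 3 * ρ :=
    calc ‖z - x‖ ≤ ‖(2 * ρ / M) • T x‖ + ‖w‖ := hzx ▸ norm_add_le _ _
      _ ≤ 2 * ρ + ρ := by
        rw [norm_smul, Real.norm_of_nonneg (by positivity), div_mul_cancel₀ _ hM.ne']
        linarith
      _ = 3 * ρ := by ring
  have hupper : ⟪T x, z - x⟫ ≤ ‖T z‖ * (3 * ρ) := by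
    have := hT x z
    rw [inner_sub_left, sub_nonneg] at this
    exact this.trans ((real_inner_le_norm _ _).trans (by gcongr))
  nlinarith

theorem le_rpow_inv_mul_of_mul_rpow_neg_le {c A r m s : ℝ} (hc : 0 < c) (hr : 0 < r)
    (hm : 0 < m) (hs : 0 < s) (h : c * r ^ (-s) ≤ A * m ^ (-s)) :
    m ≤ (A / c) ^ s⁻¹ * r := by
  have hpow : m ^ s ≤ A / c * r ^ s := by
    rw [Real.rpow_neg hr.le, Real.rpow_neg hm.le] at h
    have hrs : 0 < r ^ s := by positivity
    have hms : 0 < m ^ s := by positivity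
    rw [div_mul_eq_mul_div, le_div_iff₀ hc]
    field_simp at h
    linarith
  have hAc : 0 ≤ A / c := by
    have : 0 < A / c * r ^ s := (by positivity : 0 < m ^ s).trans_le hpow
    exact (pos_of_mul_pos_left this (by positivity)).le
  calc m = (m ^ s) ^ s⁻¹ := (Real.rpow_rpow_inv hm.le hs.ne').symm
    _ ≤ (A / c * r ^ s) ^ s⁻¹ := by gcongr
    _ = (A / c) ^ s⁻¹ * r := by
      rw [Real.mul_rpow hAc (by positivity), Real.rpow_rpow_inv hr.le hs.ne']

theorem IsMonotoneOperator.exists_norm_le_mul_one_add_norm [MeasurableSpace E] {T : E → E}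
    (hT : IsMonotoneOperator T) {μ : Measure E} {s c A R₀ : ℝ} (hs : 0 < s) (hc : 0 < c)
    (hR₀ : 0 < R₀)
    (hmass : ∀ y ρ, 1 ≤ ρ → ‖y‖ ≤ 3 * ρ → ENNReal.ofReal (c * ρ ^ (-s)) ≤ μ (ball y ρ))
    (htail : ∀ R, R₀ ≤ R → μ (T ⁻¹' {y | R ≤ ‖y‖}) ≤ ENNReal.ofReal (A * R ^ (-s))) :
    ∃ C > 0, ∀ x, ‖T x‖ ≤ C * (1 + ‖x‖) := by
  refine ⟨max (3 * R₀) (3 * (A / c) ^ s⁻¹), by positivity, fun x => ?_⟩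
  set r := 1 + ‖x‖
  have hr : 1 ≤ r := le_add_of_nonneg_right (norm_nonneg x)
  set M := ‖T x‖
  rcases le_or_gt M (3 * R₀) with hM | hM
  · calc M ≤ 3 * R₀ * 1 := by linarith
      _ ≤ max (3 * R₀) (3 * (A / c) ^ s⁻¹) * r := by gcongr; exacts [le_max_left _ _]
  have hM0 : 0 < M := by linarith
  set y := x + (2 * r / M) • T x
  have hy : ‖y‖ ≤ 3 * r :=
    calc ‖y‖ ≤ ‖x‖ + ‖(2 * r / M) • T x‖ := norm_add_le _ _
      _ = ‖x‖ + 2 * r := by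
        rw [norm_smul, Real.norm_of_nonneg (by positivity), div_mul_cancel₀ _ hM0.ne']
      _ ≤ 3 * r := by linarith
  have hball : ball y r ⊆ T ⁻¹' {w | M / 3 ≤ ‖w‖} := fun z hz => by
    have := hT.norm_le_three_mul_norm (norm_pos_iff.mp hM0) hz
    simp only [Set.mem_preimage, Set.mem_ofPred_eq]
    linarith
  have hmeasure := (hmass y r hr hy).trans
    ((measure_mono hball).trans (htail (M / 3) (by linarith)))
  have hreal := (ENNReal.ofReal_le_ofReal_iff'.mp hmeasure).resolve_right
    (not_le.mpr (by positivity))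
  have := le_rpow_inv_mul_of_mul_rpow_neg_le hc (by linarith) (by positivity) hs hreal
  calc M ≤ 3 * (A / c) ^ s⁻¹ * r := by linarith
    _ ≤ max (3 * R₀) (3 * (A / c) ^ s⁻¹) * r := by gcongr; exacts [le_max_right _ _]

end MonotoneOperator

theorem rpow_le_of_lipschitzWith_rpow_one_div {E : Type*} [SeminormedAddCommGroup E]
    {V : E → ℝ} {p : ℝ} {L : ℝ≥0} (hp : 0 < p) (hV : ∀ x, 0 ≤ V x)
    (hVL : LipschitzWith L fun x => V x ^ (1 / p)) (z : E) :
    V z ≤ (V 0 ^ (1 / p) + L * ‖z‖) ^ p := by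
  have hdist : V z ^ (1 / p) ≤ V 0 ^ (1 / p) + L * ‖z‖ := by
    have := hVL.dist_le_mul z 0
    rw [Real.dist_eq, dist_zero_right] at this
    linarith [le_abs_self (V z ^ (1 / p) - V 0 ^ (1 / p))]
  calc V z = (V z ^ (1 / p)) ^ p := by rw [one_div, Real.rpow_inv_rpow (hV z) hp.ne']
    _ ≤ (V 0 ^ (1 / p) + L * ‖z‖) ^ p := by gcongr; exact Real.rpow_nonneg (hV z) _

theorem exists_le_of_liminf_cocompact_pos {E : Type*} [NormedAddCommGroup E] [ProperSpace E]
    {f : E → ℝ} (h : 0 < liminf f (cocompact E)) :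
    ∃ ε > 0, ∃ R, ∀ y, R ≤ ‖y‖ → ε ≤ f y := by
  -- an unbounded-below liminf in `ℝ` takes the junk value `sSup ∅ = 0`
  have hbdd : IsBoundedUnder (· ≥ ·) (cocompact E) f := by
    by_contra hb
    rw [Real.liminf_of_not_isBoundedUnder hb] at h
    exact h.false
  have hev : ∀ᶠ y in comap norm atTop, liminf f (cocompact E) / 2 < f y := by
    rw [comap_norm_atTop, Metric.cobounded_eq_cocompact]
    exact eventually_lt_of_lt_liminf (half_lt_self h) hbdd
  obtain ⟨R, hR⟩ := eventually_atTop.mp (eventually_comap.mp hev)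
  exact ⟨_, half_pos h, R, fun y hy => (hR ‖y‖ hy y rfl).le⟩

section AddHaar

variable {E : Type*} [NormedAddCommGroup E] [NormedSpace ℝ E] [FiniteDimensional ℝ E]
  [MeasurableSpace E] [BorelSpace E] (μ : Measure E) [μ.IsAddHaarMeasure]

theorem setLIntegral_norm_ge_one_rpow_neg_lt_top {s : ℝ} (hs : (finrank ℝ E : ℝ) < s) :
    ∫⁻ y in {y | 1 ≤ ‖y‖}, ENNReal.ofReal (‖y‖ ^ (-s)) ∂μ < ∞ := by
  have hle (y : E) (hy : y ∈ {y : E | 1 ≤ ‖y‖}) : ENNReal.ofReal (‖y‖ ^ (-s))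
      ≤ ENNReal.ofReal (2 ^ s) * ENNReal.ofReal ((1 + ‖y‖) ^ (-s)) := by
    simp only [Set.mem_ofPred_eq] at hy
    rw [← ENNReal.ofReal_mul (by positivity)]
    gcongr
    calc ‖y‖ ^ (-s) ≤ ((1 + ‖y‖) / 2) ^ (-s) :=
          Real.rpow_le_rpow_of_nonpos (by positivity) (by linarith)
            (by linarith [(finrank ℝ E).cast_nonneg (α := ℝ)])
      _ = 2 ^ s * (1 + ‖y‖) ^ (-s) := by
          rw [Real.div_rpow (by positivity) zero_le_two, Real.rpow_neg zero_le_two,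
            div_inv_eq_mul, mul_comm]
  calc ∫⁻ y in {y | 1 ≤ ‖y‖}, ENNReal.ofReal (‖y‖ ^ (-s)) ∂μ
      ≤ ∫⁻ y in {y | 1 ≤ ‖y‖}, ENNReal.ofReal (2 ^ s) * ENNReal.ofReal ((1 + ‖y‖) ^ (-s)) ∂μ :=
        setLIntegral_mono' (measurableSet_le measurable_const measurable_norm) hle
    _ ≤ ∫⁻ y, ENNReal.ofReal (2 ^ s) * ENNReal.ofReal ((1 + ‖y‖) ^ (-s)) ∂μ :=
        setLIntegral_le_lintegral _ _
    _ < ∞ := by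
      rw [lintegral_const_mul' _ _ ENNReal.ofReal_ne_top]
      exact ENNReal.mul_lt_top ENNReal.ofReal_lt_top (finite_integral_one_add_norm hs)

theorem setLIntegral_norm_ge_rpow_neg_eq_mul {R : ℝ} (hR : 0 < R) (s : ℝ) :
    ∫⁻ y in {y | R ≤ ‖y‖}, ENNReal.ofReal (‖y‖ ^ (-s)) ∂μ
      = ENNReal.ofReal (R ^ ((finrank ℝ E : ℝ) - s))
        * ∫⁻ y in {y | 1 ≤ ‖y‖}, ENNReal.ofReal (‖y‖ ^ (-s)) ∂μ := by
  set f : E → ℝ≥0∞ := fun y => ENNReal.ofReal (‖y‖ ^ (-s))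
  have hmeas (t : ℝ) : MeasurableSet {y : E | t ≤ ‖y‖} :=
    measurableSet_le measurable_const measurable_norm
  have hscale (u : E) : {y | R ≤ ‖y‖}.indicator f (R • u)
      = ENNReal.ofReal (R ^ (-s)) * {y | 1 ≤ ‖y‖}.indicator f u := by
    simp only [f, Set.indicator, Set.mem_ofPred_eq, norm_smul, Real.norm_of_nonneg hR.le,
      le_mul_iff_one_le_right hR]
    split_ifs
    · rw [← ENNReal.ofReal_mul (by positivity), Real.mul_rpow hR.le (norm_nonneg u)]
    · simp
  -- substitute `y = R • u`, using `map (R • ·) μ = R ^ (-finrank) • μ`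
  have key := lintegral_map_equiv ({y | R ≤ ‖y‖}.indicator f)
    (MeasurableEquiv.smul₀ R hR.ne') (μ := μ)
  rw [MeasurableEquiv.coe_smul₀, Measure.map_addHaar_smul μ hR.ne', lintegral_smul_measure,
    lintegral_indicator (hmeas _)] at key
  simp only [hscale] at key
  rw [lintegral_const_mul' _ _ ENNReal.ofReal_ne_top, lintegral_indicator (hmeas _)] at key
  have hRd : 0 < R ^ finrank ℝ E := by positivity
  rw [abs_of_pos (inv_pos.mpr hRd), smul_eq_mul] at key
  calc ∫⁻ y in {y | R ≤ ‖y‖}, f y ∂μ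
      = ENNReal.ofReal (R ^ finrank ℝ E)
          * (ENNReal.ofReal (R ^ finrank ℝ E)⁻¹ * ∫⁻ y in {y | R ≤ ‖y‖}, f y ∂μ) := by
        rw [← mul_assoc, ← ENNReal.ofReal_mul hRd.le, mul_inv_cancel₀ hRd.ne',
          ENNReal.ofReal_one, one_mul]
    _ = _ := by
        rw [key, ← mul_assoc, ← ENNReal.ofReal_mul hRd.le, ← Real.rpow_natCast,
          ← Real.rpow_add hR, sub_eq_add_neg]

theorem exists_withDensity_norm_ge_le {f : E → ℝ≥0∞} {A s R₀ : ℝ} (hA : 0 ≤ A)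
    (hs : (finrank ℝ E : ℝ) < s) (hR₀ : 0 < R₀)
    (hf : ∀ y, R₀ ≤ ‖y‖ → f y ≤ ENNReal.ofReal (A * ‖y‖ ^ (-s))) :
    ∃ C, ∀ R, R₀ ≤ R →
      μ.withDensity f {y | R ≤ ‖y‖} ≤ ENNReal.ofReal (C * R ^ ((finrank ℝ E : ℝ) - s)) := by
  set I := ∫⁻ y in {y | 1 ≤ ‖y‖}, ENNReal.ofReal (‖y‖ ^ (-s)) ∂μ
  have hI : I ≠ ∞ := (setLIntegral_norm_ge_one_rpow_neg_lt_top μ hs).ne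
  refine ⟨A * I.toReal, fun R hR => ?_⟩
  have hmeas : MeasurableSet {y : E | R ≤ ‖y‖} :=
    measurableSet_le measurable_const measurable_norm
  calc μ.withDensity f {y | R ≤ ‖y‖} = ∫⁻ y in {y | R ≤ ‖y‖}, f y ∂μ :=
        withDensity_apply _ hmeas
    _ ≤ ∫⁻ y in {y | R ≤ ‖y‖}, ENNReal.ofReal A * ENNReal.ofReal (‖y‖ ^ (-s)) ∂μ :=
        setLIntegral_mono' hmeas fun y hy =>
          (hf y (hR.trans hy)).trans_eq (ENNReal.ofReal_mul hA)
    _ = ENNReal.ofReal A * (ENNReal.ofReal (R ^ ((finrank ℝ E : ℝ) - s)) * I) := by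
        rw [lintegral_const_mul' _ _ ENNReal.ofReal_ne_top,
          setLIntegral_norm_ge_rpow_neg_eq_mul μ (hR₀.trans_le hR)]
    _ = ENNReal.ofReal (A * I.toReal * R ^ ((finrank ℝ E : ℝ) - s)) := by
        rw [ENNReal.ofReal_mul (by positivity), ENNReal.ofReal_mul hA, ENNReal.ofReal_toReal hI]
        ring

theorem exists_le_withDensity_ball {V : E → ℝ} {p n : ℝ} {L : ℝ≥0} (hp : 0 < p) (hn : 0 ≤ n)
    (hV : ∀ x, 0 < V x) (hVL : LipschitzWith L fun x => V x ^ (1 / p)) :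
    ∃ c > 0, ∀ y ρ, 1 ≤ ρ → ‖y‖ ≤ 3 * ρ →
      ENNReal.ofReal (c * ρ ^ ((finrank ℝ E : ℝ) - p * n))
        ≤ μ.withDensity (fun x => ENNReal.ofReal (V x ^ (-n))) (ball y ρ) := by
  have hV0 := hV 0
  set K := (V 0 ^ (1 / p) + 4 * L) ^ p
  have hK : 0 < K := by positivity
  have hω : μ (ball 0 1) ≠ ∞ := measure_ball_lt_top.ne
  have hωpos : 0 < (μ (ball 0 1)).toReal :=
    ENNReal.toReal_pos (measure_ball_pos μ _ one_pos).ne' hω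
  refine ⟨K ^ (-n) * (μ (ball 0 1)).toReal, by positivity, fun y ρ hρ hy => ?_⟩
  have hρ0 : 0 < ρ := one_pos.trans_le hρ
  have hV_le (z : E) (hz : z ∈ ball y ρ) : V z ≤ K * ρ ^ p := by
    have hz : ‖z‖ ≤ 4 * ρ := by
      rw [mem_ball, dist_eq_norm] at hz
      linarith [norm_le_norm_add_norm_sub' z y]
    calc V z ≤ (V 0 ^ (1 / p) + L * ‖z‖) ^ p :=
          rpow_le_of_lipschitzWith_rpow_one_div hp (fun x => (hV x).le) hVL z
      _ ≤ ((V 0 ^ (1 / p) + 4 * L) * ρ) ^ p := by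
          gcongr
          nlinarith [L.coe_nonneg, Real.rpow_nonneg hV0.le (1 / p)]
      _ = K * ρ ^ p := Real.mul_rpow (by positivity) hρ0.le
  have hdensity (z : E) (hz : z ∈ ball y ρ) :
      ENNReal.ofReal (K ^ (-n) * ρ ^ (-(p * n))) ≤ ENNReal.ofReal (V z ^ (-n)) := by
    gcongr
    calc K ^ (-n) * ρ ^ (-(p * n)) = (K * ρ ^ p) ^ (-n) := by
          rw [Real.mul_rpow hK.le (by positivity), ← Real.rpow_mul hρ0.le, mul_neg]
      _ ≤ V z ^ (-n) := Real.rpow_le_rpow_of_nonpos (hV z) (hV_le z hz) (by linarith)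
  calc ENNReal.ofReal (K ^ (-n) * (μ (ball 0 1)).toReal * ρ ^ ((finrank ℝ E : ℝ) - p * n))
      = ENNReal.ofReal (K ^ (-n) * ρ ^ (-(p * n))) * μ (ball y ρ) := by
        conv_rhs => rw [Measure.addHaar_ball_of_pos μ y hρ0, ← ENNReal.ofReal_toReal hω]
        rw [← ENNReal.ofReal_mul (by positivity), ← ENNReal.ofReal_mul (by positivity),
          ← Real.rpow_natCast, sub_eq_add_neg, Real.rpow_add hρ0]
        congr 1
        ring
    _ = ∫⁻ _ in ball y ρ, ENNReal.ofReal (K ^ (-n) * ρ ^ (-(p * n))) ∂μ :=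
        (setLIntegral_const _ _).symm
    _ ≤ ∫⁻ z in ball y ρ, ENNReal.ofReal (V z ^ (-n)) ∂μ :=
        setLIntegral_mono' measurableSet_ball hdensity
    _ = _ := (withDensity_apply _ measurableSet_ball).symm

theorem exists_withDensity_rpow_neg_norm_ge_le {W : E → ℝ} {p n : ℝ}
    (hpn : (finrank ℝ E : ℝ) < p * n) (hn : 0 ≤ n)
    (hW : 0 < liminf (fun y => W y / ‖y‖ ^ p) (cocompact E)) :
    ∃ A R₀, 0 < R₀ ∧ ∀ R, R₀ ≤ R →
      μ.withDensity (fun y => ENNReal.ofReal (W y ^ (-n))) {y | R ≤ ‖y‖}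
        ≤ ENNReal.ofReal (A * R ^ ((finrank ℝ E : ℝ) - p * n)) := by
  obtain ⟨ε, hε, R, hR⟩ := exists_le_of_liminf_cocompact_pos hW
  have hdensity (y : E) (hy : max R 1 ≤ ‖y‖) :
      ENNReal.ofReal (W y ^ (-n)) ≤ ENNReal.ofReal (ε ^ (-n) * ‖y‖ ^ (-(p * n))) := by
    have hy0 : 0 < ‖y‖ := one_pos.trans_le ((le_max_right _ _).trans hy)
    have hWy : ε * ‖y‖ ^ p ≤ W y :=
      (le_div_iff₀ (by positivity)).mp (hR y ((le_max_left _ _).trans hy))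
    gcongr
    calc W y ^ (-n) ≤ (ε * ‖y‖ ^ p) ^ (-n) :=
          Real.rpow_le_rpow_of_nonpos (by positivity) hWy (by linarith)
      _ = ε ^ (-n) * ‖y‖ ^ (-(p * n)) := by
          rw [Real.mul_rpow hε.le (by positivity), ← Real.rpow_mul hy0.le, mul_neg]
  obtain ⟨A, hA⟩ := exists_withDensity_norm_ge_le μ (by positivity) hpn (by positivity) hdensity
  exact ⟨A, max R 1, by positivity, hA⟩

end AddHaar

theorem linear_growth_of_monotone_transport_general
    (d : ℕ) (hd : 1 ≤ d) (p : ℝ) (hp : 1 < p)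
    (V W : EuclideanSpace ℝ (Fin d) → ℝ)
    (hVpos : ∀ x, 0 < V x)
    (LV : ℝ≥0) (hVpow : LipschitzWith LV (fun x => V x ^ (1 / p)))
    (hWgrowth : 0 < liminf (fun y => W y / ‖y‖ ^ p)
      (cocompact (EuclideanSpace ℝ (Fin d))))
    (φ : EuclideanSpace ℝ (Fin d) → ℝ)
    (hφconv : ConvexOn ℝ Set.univ φ) (hφ1 : ContDiff ℝ 1 φ)
    (hpush : Measure.map (fun x => gradient φ x)
        (volume.withDensity fun x => ENNReal.ofReal (V x ^ (-(d : ℝ))))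
      = volume.withDensity fun y => ENNReal.ofReal (W y ^ (-(d : ℝ)))) :
    ∃ C > 0, ∀ x, ‖gradient φ x‖ ≤ C * (1 + ‖x‖) := by
  have hrank : (finrank ℝ (EuclideanSpace ℝ (Fin d)) : ℝ) = d := by
    rw [finrank_euclideanSpace_fin]
  have hd' : (1 : ℝ) ≤ d := by exact_mod_cast hd
  have hexp : (d : ℝ) - p * d = -(p * d - d) := by ring
  obtain ⟨A, R₀, hR₀, hA⟩ := exists_withDensity_rpow_neg_norm_ge_le volume
    (by rw [hrank]; nlinarith) (Nat.cast_nonneg d) hWgrowth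
  obtain ⟨c, hc, hmass⟩ := exists_le_withDensity_ball volume (by linarith) (Nat.cast_nonneg d)
    hVpos hVpow
  have hgrad : Measurable (gradient φ) :=
    (InnerProductSpace.toDual ℝ _).symm.continuous.measurable.comp (measurable_fderiv ℝ φ)
  have htail (R : ℝ) (hR : R₀ ≤ R) :
      (volume.withDensity fun x => ENNReal.ofReal (V x ^ (-(d : ℝ))))
        (gradient φ ⁻¹' {y | R ≤ ‖y‖}) ≤ ENNReal.ofReal (A * R ^ (-(p * d - d))) :=
    calc _ ≤ Measure.map (gradient φ)
          (volume.withDensity fun x => ENNReal.ofReal (V x ^ (-(d : ℝ)))) {y | R ≤ ‖y‖} :=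
        Measure.le_map_apply hgrad.aemeasurable _
      _ ≤ _ := by simpa only [hpush, hrank, hexp] using hA R hR
  exact (hφconv.isMonotoneOperator_gradient (hφ1.differentiable one_ne_zero)
    ).exists_norm_le_mul_one_add_norm (by nlinarith) hc hR₀
    (fun y ρ hρ hy => by simpa only [hrank, hexp] using hmass y ρ hρ hy) htail

/-- Theorem 1.1: linear growth of the monotone transport map between
`1/d`-concave densities. -/
theorem linear_growth_of_monotone_transport
    (d : ℕ) (hd : 1 ≤ d) (p : ℝ) (hp : 1 < p)
    (V W : EuclideanSpace ℝ (Fin d) → ℝ)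
    (hVpos : ∀ x, 0 < V x) (hWpos : ∀ y, 0 < W y)
    (cV cW : ℝ) (hcV : 0 < cV) (hcW : 0 < cW)
    (hVlb : ∀ x, cV ≤ V x) (hWlb : ∀ y, cW ≤ W y)
    (hV1 : ContDiff ℝ 1 V) (hW1 : ContDiff ℝ 1 W)
    (hVlip : LocallyLipschitz (fun x => gradient V x))
    (hWlip : LocallyLipschitz (fun y => gradient W y))
    (hVprob : ∫ x, V x ^ (-(d : ℝ)) = 1)
    (hWprob : ∫ y, W y ^ (-(d : ℝ)) = 1)
    (LV : ℝ≥0) (hVpow : LipschitzWith LV (fun x => V x ^ (1 / p)))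
    (hWgrowth : 0 < liminf (fun y => W y / ‖y‖ ^ p)
      (cocompact (EuclideanSpace ℝ (Fin d))))
    (hWrad : 1 < liminf (fun y => ⟪gradient W y, y⟫ / W y)
      (cocompact (EuclideanSpace ℝ (Fin d))))
    (φ : EuclideanSpace ℝ (Fin d) → ℝ)
    (hφconv : ConvexOn ℝ Set.univ φ) (hφ1 : ContDiff ℝ 1 φ)
    (hpush : Measure.map (fun x => gradient φ x)
        (volume.withDensity fun x => ENNReal.ofReal (V x ^ (-(d : ℝ))))
      = volume.withDensity fun y => ENNReal.ofReal (W y ^ (-(d : ℝ)))) :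
    ∃ C > 0, ∀ x, ‖gradient φ x‖ ≤ C * (1 + ‖x‖) :=
  linear_growth_of_monotone_transport_general d hd p hp V W hVpos LV hVpow hWgrowth φ hφconv hφ1
    hpush
end

section
/- Let d ≥ 1 be an integer and let g be the standard Gaussian density on ℝ^d, g(y) = (2π)^{−d/2} e^{−|y|²/2}. Let V : ℝ^d → ℝ be a positive function of class C^{1,1}_loc, bounded below by a positive constant, such that V^{-d} is a probability density on ℝ^d, and assume there exists A > 0 with |∇V(x)|/V(x) ≤ A/(1+|x|) for all x ∈ ℝ^d. Let φ : ℝ^d → ℝ be a convex function of class C¹ such that the pushforward of V(x)^{-d} dx under ∇φ equals g(y) dy. Then there exists a constant C > 0 such that |∇φ(x)| ≤ C√(1 + log(1+|x|)) for all x ∈ ℝ^d. -/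
/-!
Put `R = ‖∇φ x‖`. Since `∇φ` is monotone, `‖∇φ‖ ≥ R / 3` on the ball `B` of radius `1/4` centred
at `x + ∇φ x / (2R)`, so `B` carries at most the Gaussian mass of `{‖y‖ ≥ R / 3}`, which is
`O(exp (-R² / 36))`. Integrating `‖∇V‖ / V ≤ A / (1 + ‖x‖)` along rays gives
`V z ≤ V 0 (1 + ‖z‖)^A`, so `B` also carries mass at least a constant times `(2 + ‖x‖)^(-dA)`.
Comparing the two bounds, `R² ≤ a + b log (2 + ‖x‖)`.
-/

open MeasureTheory Real Set Metric
open scoped RealInnerProductSpace ENNReal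

theorem mul_measure_le_withDensity_apply {α : Type*} [MeasurableSpace α] {μ : Measure α}
    {ρ : α → ℝ≥0∞} {a : ℝ≥0∞} {s : Set α} (hs : MeasurableSet s) (h : ∀ x ∈ s, a ≤ ρ x) :
    a * μ s ≤ μ.withDensity ρ s := by
  rw [← setLIntegral_const]
  exact (setLIntegral_mono' hs h).trans (withDensity_apply_le ρ s)

theorem le_log_sub_log_of_le_mul_exp {ℓ K s : ℝ} (hℓ : 0 < ℓ) (h : ℓ ≤ exp (-s) * K) :
    s ≤ log K - log ℓ := by
  have hK : 0 < K := pos_of_mul_pos_right (hℓ.trans_le h) (exp_pos _).le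
  have := log_le_log hℓ h
  rw [log_mul (exp_pos _).ne' hK.ne', log_exp] at this
  linarith

theorem exists_le_mul_sqrt_one_add_log_of_sq_le {F : Type*} [SeminormedAddCommGroup F]
    (f : F → ℝ) {a b : ℝ} (hb : 0 ≤ b) (hf : ∀ x, f x ^ 2 ≤ a + b * log (2 + ‖x‖)) :
    ∃ C > 0, ∀ x, f x ≤ C * √(1 + log (1 + ‖x‖)) := by
  refine ⟨√(max a 0 + b + 1), by positivity, fun x => ?_⟩
  set L := log (1 + ‖x‖)
  have hL : 0 ≤ L := log_nonneg (by linarith [norm_nonneg x])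
  have hlog : log (2 + ‖x‖) ≤ 1 + L := calc
    log (2 + ‖x‖) ≤ log (2 * (1 + ‖x‖)) :=
      log_le_log (by positivity) (by linarith [norm_nonneg x])
    _ = log 2 + L := log_mul two_ne_zero (by positivity)
    _ ≤ 1 + L := by linarith [log_two_lt_d9]
  rw [← sqrt_mul (by positivity)]
  refine le_sqrt_of_sq_le ((hf x).trans ?_)
  nlinarith [le_max_left a 0, le_max_right a 0, mul_le_mul_of_nonneg_left hlog hb]

section Normed

variable {E : Type*} [NormedAddCommGroup E] [NormedSpace ℝ E]

theorem norm_inv_two_mul_norm_smul_le (v : E) : ‖(2 * ‖v‖)⁻¹ • v‖ ≤ 2⁻¹ := by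
  rcases eq_or_ne v 0 with rfl | hv
  · simp
  rw [norm_smul, norm_inv, norm_mul, norm_norm, Real.norm_two, mul_inv, mul_assoc,
    inv_mul_cancel₀ (norm_ne_zero_iff.mpr hv), mul_one]

theorem closedBall_add_smul_subset_closedBall (x v : E) :
    closedBall (x + (2 * ‖v‖)⁻¹ • v) 4⁻¹ ⊆ closedBall x (3 / 4) :=
  closedBall_subset_closedBall' <| by
    rw [dist_eq_norm, add_sub_cancel_left]
    linarith [norm_inv_two_mul_norm_smul_le v]

end Normed

section Gradient

variable {E : Type*} [NormedAddCommGroup E] [InnerProductSpace ℝ E] [CompleteSpace E]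

theorem hasDerivAt_comp_lineMap {f : E → ℝ} (hf : Differentiable ℝ f) (x y : E) (t : ℝ) :
    HasDerivAt (f ∘ AffineMap.lineMap x y) ⟪gradient f (AffineMap.lineMap x y t), y - x⟫ t := by
  simpa [InnerProductSpace.toDual_apply_apply] using
    (hf _).hasGradientAt.hasFDerivAt.comp_hasDerivAt t
      (AffineMap.hasDerivAt_lineMap (a := x) (b := y))

theorem ConvexOn.inner_gradient_le_inner_gradient {φ : E → ℝ} (hconv : ConvexOn ℝ univ φ)
    (hdiff : Differentiable ℝ φ) (x z : E) :
    ⟪gradient φ x, z - x⟫ ≤ ⟪gradient φ z, z - x⟫ := by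
  have hline : ConvexOn ℝ univ (φ ∘ AffineMap.lineMap (k := ℝ) x z) := by
    simpa using hconv.comp_affineMap (AffineMap.lineMap (k := ℝ) x z)
  have hd := hasDerivAt_comp_lineMap hdiff x z
  have h0 := hline.deriv_le_slope (mem_univ 0) (mem_univ 1) one_pos (hd 0).differentiableAt
  have h1 := hline.slope_le_deriv (mem_univ 0) (mem_univ 1) one_pos (hd 1).differentiableAt
  rw [(hd 0).deriv, AffineMap.lineMap_apply_zero] at h0
  rw [(hd 1).deriv, AffineMap.lineMap_apply_one] at h1
  exact h0.trans h1

theorem ConvexOn.norm_gradient_div_three_le {φ : E → ℝ} (hconv : ConvexOn ℝ univ φ)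
    (hdiff : Differentiable ℝ φ) (x : E) {z : E}
    (hz : z ∈ closedBall (x + (2 * ‖gradient φ x‖)⁻¹ • gradient φ x) 4⁻¹) :
    ‖gradient φ x‖ / 3 ≤ ‖gradient φ z‖ := by
  rcases (norm_nonneg (gradient φ x)).eq_or_lt with hR0 | hRpos
  · rw [← hR0]; simp
  set R := ‖gradient φ x‖ with hR
  set c := x + (2 * R)⁻¹ • gradient φ x
  have hzc : ‖z - c‖ ≤ 4⁻¹ := mem_closedBall_iff_norm.mp hz
  have hcx : c - x = (2 * R)⁻¹ • gradient φ x := add_sub_cancel_left x _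
  have hzx : ‖z - x‖ ≤ 3 / 4 :=
    mem_closedBall_iff_norm.mp (closedBall_add_smul_subset_closedBall x _ hz)
  have hlow : R / 4 ≤ ⟪gradient φ x, z - x⟫ := by
    have hzc' : -(R * 4⁻¹) ≤ ⟪gradient φ x, z - c⟫ := calc
      -(R * 4⁻¹) ≤ -(R * ‖z - c‖) := by gcongr
      _ ≤ _ := neg_le_of_abs_le (abs_real_inner_le_norm _ _)
    have hcx' : ⟪gradient φ x, c - x⟫ = R / 2 := by
      rw [hcx, real_inner_smul_right, real_inner_self_eq_norm_sq, ← hR]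
      field_simp
    rw [← sub_add_sub_cancel z c x, inner_add_right, hcx']
    linarith
  have hup : ⟪gradient φ z, z - x⟫ ≤ ‖gradient φ z‖ * (3 / 4) :=
    (real_inner_le_norm _ _).trans (by gcongr)
  linarith [hconv.inner_gradient_le_inner_gradient hdiff x z]

theorem le_mul_one_add_norm_rpow_of_norm_gradient_div_le {V : E → ℝ} (hVpos : ∀ x, 0 < V x)
    (hV : Differentiable ℝ V) {A : ℝ} (hVA : ∀ x, ‖gradient V x‖ / V x ≤ A / (1 + ‖x‖))
    (z : E) : V z ≤ V 0 * (1 + ‖z‖) ^ A := by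
  set ψ : ℝ → ℝ := fun t => log (V (AffineMap.lineMap 0 z t)) - A * log (1 + t * ‖z‖)
  have hderiv : ∀ t ∈ Icc (0 : ℝ) 1, HasDerivAt ψ
      (⟪gradient V (AffineMap.lineMap 0 z t), z⟫ / V (AffineMap.lineMap 0 z t)
        - A * (‖z‖ / (1 + t * ‖z‖))) t := fun t ht => by
    have h1 : 0 < 1 + t * ‖z‖ := by have := ht.1; positivity
    have hlog : HasDerivAt (fun s => log (1 + s * ‖z‖)) (‖z‖ / (1 + t * ‖z‖)) t := by
      simpa using (((hasDerivAt_id t).mul_const ‖z‖).const_add 1).log h1.ne'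
    have h := ((hasDerivAt_comp_lineMap hV 0 z t).log (hVpos _).ne').sub (hlog.const_mul A)
    rw [sub_zero] at h
    exact h
  have hanti : AntitoneOn ψ (Icc 0 1) := by
    refine antitoneOn_of_hasDerivWithinAt_nonpos (convex_Icc 0 1)
      (fun t ht => (hderiv t ht).continuousAt.continuousWithinAt)
      (fun t ht => (hderiv t (interior_subset ht)).hasDerivWithinAt) fun t ht => ?_
    rw [interior_Icc] at ht
    set w := AffineMap.lineMap (0 : E) z t
    have hw : ‖w‖ = t * ‖z‖ := by
      simp [w, AffineMap.lineMap_apply, norm_smul, abs_of_nonneg ht.1.le]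
    have hwV := hVpos w
    rw [sub_nonpos]
    calc ⟪gradient V w, z⟫ / V w ≤ ‖gradient V w‖ / V w * ‖z‖ := by
          rw [div_mul_eq_mul_div]; gcongr; exact real_inner_le_norm _ _
      _ ≤ A / (1 + ‖w‖) * ‖z‖ := mul_le_mul_of_nonneg_right (hVA w) (norm_nonneg z)
      _ = A * (‖z‖ / (1 + t * ‖z‖)) := by rw [hw]; ring
  have h01 := hanti (left_mem_Icc.mpr zero_le_one) (right_mem_Icc.mpr zero_le_one) zero_le_one
  simp only [ψ, AffineMap.lineMap_apply_zero, AffineMap.lineMap_apply_one, zero_mul, add_zero,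
    log_one, mul_zero, sub_zero, one_mul] at h01
  rw [← log_le_log_iff (hVpos z) (by have := hVpos 0; positivity),
    log_mul (hVpos 0).ne' (by positivity), log_rpow (by positivity)]
  linarith

end Gradient

section Measure

variable {E : Type*} [NormedAddCommGroup E] [InnerProductSpace ℝ E] [FiniteDimensional ℝ E]
  [MeasurableSpace E] [BorelSpace E]

theorem ConvexOn.measure_closedBall_le_map_gradient {φ : E → ℝ} (hconv : ConvexOn ℝ univ φ)
    (hdiff : Differentiable ℝ φ) (μ : Measure E) (x : E) :
    μ (closedBall (x + (2 * ‖gradient φ x‖)⁻¹ • gradient φ x) 4⁻¹)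
      ≤ μ.map (gradient φ) {y | ‖gradient φ x‖ / 3 ≤ ‖y‖} := by
  have hmeas : Measurable (gradient φ) :=
    (InnerProductSpace.toDual ℝ E).symm.continuous.measurable.comp (measurable_fderiv ℝ φ)
  rw [Measure.map_apply hmeas (isClosed_le continuous_const continuous_norm).measurableSet]
  exact measure_mono fun z hz => hconv.norm_gradient_div_three_le hdiff x hz

theorem withDensity_gaussian_tail_le {c : ℝ} (hc : 0 ≤ c) {r : ℝ} (hr : 0 ≤ r) :
    volume.withDensity (fun y : E => ENNReal.ofReal (c * exp (-‖y‖ ^ 2 / 2))) {y | r ≤ ‖y‖}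
      ≤ ENNReal.ofReal (exp (-(r ^ 2 / 4)))
        * ∫⁻ y : E, ENNReal.ofReal (c * exp (-4⁻¹ * ‖y‖ ^ 2)) := by
  have hs : MeasurableSet {y : E | r ≤ ‖y‖} :=
    (isClosed_le continuous_const continuous_norm).measurableSet
  rw [withDensity_apply _ hs, ← lintegral_const_mul' _ _ ENNReal.ofReal_ne_top]
  refine (setLIntegral_mono' hs fun y hy => ?_).trans (setLIntegral_le_lintegral _ _)
  rw [← ENNReal.ofReal_mul (exp_nonneg _)]
  refine ENNReal.ofReal_le_ofReal ?_
  have : r ^ 2 ≤ ‖y‖ ^ 2 := pow_le_pow_left₀ hr hy 2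
  calc c * exp (-‖y‖ ^ 2 / 2) ≤ c * exp (-(r ^ 2 / 4) + -4⁻¹ * ‖y‖ ^ 2) := by
        gcongr; linarith
    _ = exp (-(r ^ 2 / 4)) * (c * exp (-4⁻¹ * ‖y‖ ^ 2)) := by rw [exp_add]; ring

theorem lintegral_ofReal_mul_exp_neg_mul_sq_norm_lt_top (c : ℝ) {b : ℝ} (hb : 0 < b) :
    ∫⁻ y : E, ENNReal.ofReal (c * exp (-b * ‖y‖ ^ 2)) < ∞ := by
  have h : Integrable (fun y : E => exp (-b * ‖y‖ ^ 2)) := by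
    refine Integrable.of_integral_ne_zero ?_
    rw [GaussianFourier.integral_rexp_neg_mul_sq_norm hb]
    positivity
  exact (h.const_mul c).lintegral_lt_top

theorem ofReal_mul_volume_le_withDensity_closedBall {V : E → ℝ} (hVpos : ∀ x, 0 < V x)
    (hV : Differentiable ℝ V) {A : ℝ} (hA : 0 ≤ A)
    (hVA : ∀ x, ‖gradient V x‖ / V x ≤ A / (1 + ‖x‖)) {p : ℝ} (hp : 0 ≤ p) (x v : E) :
    ENNReal.ofReal ((V 0 * (2 + ‖x‖) ^ A) ^ (-p)) * volume (closedBall (0 : E) 4⁻¹)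
      ≤ volume.withDensity (fun x => ENNReal.ofReal (V x ^ (-p)))
          (closedBall (x + (2 * ‖v‖)⁻¹ • v) 4⁻¹) := by
  rw [← Measure.addHaar_closedBall_center volume (x + (2 * ‖v‖)⁻¹ • v)]
  refine mul_measure_le_withDensity_apply measurableSet_closedBall fun z hz =>
    ENNReal.ofReal_le_ofReal (rpow_le_rpow_of_nonpos (hVpos z) ?_ (neg_nonpos.mpr hp))
  have hzx : ‖z‖ ≤ 1 + ‖x‖ := by
    have := mem_closedBall_iff_norm.mp (closedBall_add_smul_subset_closedBall x v hz)
    linarith [norm_le_norm_add_norm_sub' z x]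
  calc V z ≤ V 0 * (1 + ‖z‖) ^ A := le_mul_one_add_norm_rpow_of_norm_gradient_div_le hVpos hV hVA z
    _ ≤ V 0 * (2 + ‖x‖) ^ A := by have := hVpos 0; gcongr ?_ * ?_ ^ A; linarith

theorem exists_sq_norm_gradient_le_add_mul_log {V : E → ℝ} (hVpos : ∀ x, 0 < V x)
    (hV : Differentiable ℝ V) {A : ℝ} (hA : 0 ≤ A)
    (hVA : ∀ x, ‖gradient V x‖ / V x ≤ A / (1 + ‖x‖)) {φ : E → ℝ} (hconv : ConvexOn ℝ univ φ)
    (hdiff : Differentiable ℝ φ) {p c : ℝ} (hp : 0 ≤ p) (hc : 0 ≤ c)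
    (hpush : Measure.map (gradient φ) (volume.withDensity fun x => ENNReal.ofReal (V x ^ (-p)))
      = volume.withDensity fun y => ENNReal.ofReal (c * exp (-‖y‖ ^ 2 / 2))) :
    ∃ a b, 0 ≤ b ∧ ∀ x, ‖gradient φ x‖ ^ 2 ≤ a + b * log (2 + ‖x‖) := by
  set I := ∫⁻ y : E, ENNReal.ofReal (c * exp (-4⁻¹ * ‖y‖ ^ 2))
  have hI : I ≠ ∞ := (lintegral_ofReal_mul_exp_neg_mul_sq_norm_lt_top c (by norm_num)).ne
  have hball : volume (closedBall (0 : E) 4⁻¹) ≠ ∞ := measure_closedBall_lt_top.ne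
  set m := (volume (closedBall (0 : E) 4⁻¹)).toReal
  have hm : 0 < m := ENNReal.toReal_pos (measure_closedBall_pos volume 0 (by norm_num)).ne' hball
  refine ⟨36 * (log I.toReal - log m + p * log (V 0)), 36 * p * A, by positivity, fun x => ?_⟩
  set R := ‖gradient φ x‖
  set B := closedBall (x + (2 * R)⁻¹ • gradient φ x) 4⁻¹
  set ℓ := (V 0 * (2 + ‖x‖) ^ A) ^ (-p)
  have hV0 := hVpos 0
  have hℓ : 0 < ℓ := by positivity
  have hlow : ENNReal.ofReal (ℓ * m)
      ≤ volume.withDensity (fun x => ENNReal.ofReal (V x ^ (-p))) B := by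
    rw [ENNReal.ofReal_mul hℓ.le, ENNReal.ofReal_toReal hball]
    exact ofReal_mul_volume_le_withDensity_closedBall hVpos hV hA hVA hp x _
  have hup : volume.withDensity (fun x => ENNReal.ofReal (V x ^ (-p))) B
      ≤ ENNReal.ofReal (exp (-((R / 3) ^ 2 / 4)) * I.toReal) := calc
    _ ≤ _ := hconv.measure_closedBall_le_map_gradient hdiff _ x
    _ ≤ _ := hpush ▸ withDensity_gaussian_tail_le hc (by positivity)
    _ = _ := by rw [ENNReal.ofReal_mul (exp_nonneg _), ENNReal.ofReal_toReal hI]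
  have := le_log_sub_log_of_le_mul_exp (by positivity)
    ((ENNReal.ofReal_le_ofReal_iff (by positivity)).mp (hlow.trans hup))
  rw [log_mul hℓ.ne' hm.ne', log_rpow (by positivity), log_mul hV0.ne' (by positivity),
    log_rpow (by positivity)] at this
  linarith

end Measure

theorem log_growth_of_monotone_transport_to_gaussian_general
    (d : ℕ)
    (V : EuclideanSpace ℝ (Fin d) → ℝ)
    (hVpos : ∀ x, 0 < V x)
    (hV1 : ContDiff ℝ 1 V)
    (A : ℝ) (hA : 0 < A)
    (hV2 : ∀ x, ‖gradient V x‖ / V x ≤ A / (1 + ‖x‖))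
    (φ : EuclideanSpace ℝ (Fin d) → ℝ)
    (hφconv : ConvexOn ℝ Set.univ φ) (hφ1 : ContDiff ℝ 1 φ)
    (hpush : Measure.map (fun x => gradient φ x)
        (volume.withDensity fun x => ENNReal.ofReal (V x ^ (-(d : ℝ))))
      = volume.withDensity fun y =>
          ENNReal.ofReal ((2 * Real.pi) ^ (-(d : ℝ) / 2) * Real.exp (-‖y‖ ^ 2 / 2))) :
    ∃ C > 0, ∀ x, ‖gradient φ x‖ ≤ C * Real.sqrt (1 + Real.log (1 + ‖x‖)) := by
  obtain ⟨a, b, hb, hsq⟩ := exists_sq_norm_gradient_le_add_mul_log hVpos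
    (hV1.differentiable one_ne_zero) hA.le hV2 hφconv (hφ1.differentiable one_ne_zero)
    (Nat.cast_nonneg d) (by positivity) hpush
  exact exists_le_mul_sqrt_one_add_log_of_sq_le _ hb hsq

/-- Theorem 2.2: logarithmic growth of the monotone transport map from a
polynomially decaying density to the standard Gaussian. -/
theorem log_growth_of_monotone_transport_to_gaussian
    (d : ℕ) (hd : 1 ≤ d)
    (V : EuclideanSpace ℝ (Fin d) → ℝ)
    (hVpos : ∀ x, 0 < V x)
    (cV : ℝ) (hcV : 0 < cV) (hVlb : ∀ x, cV ≤ V x)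
    (hV1 : ContDiff ℝ 1 V)
    (hVlip : LocallyLipschitz (fun x => gradient V x))
    (hVprob : ∫ x, V x ^ (-(d : ℝ)) = 1)
    (A : ℝ) (hA : 0 < A)
    (hV2 : ∀ x, ‖gradient V x‖ / V x ≤ A / (1 + ‖x‖))
    (φ : EuclideanSpace ℝ (Fin d) → ℝ)
    (hφconv : ConvexOn ℝ Set.univ φ) (hφ1 : ContDiff ℝ 1 φ)
    (hpush : Measure.map (fun x => gradient φ x)
        (volume.withDensity fun x => ENNReal.ofReal (V x ^ (-(d : ℝ))))
      = volume.withDensity fun y =>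
          ENNReal.ofReal ((2 * Real.pi) ^ (-(d : ℝ) / 2) * Real.exp (-‖y‖ ^ 2 / 2))) :
    ∃ C > 0, ∀ x, ‖gradient φ x‖ ≤ C * Real.sqrt (1 + Real.log (1 + ‖x‖)) :=
  log_growth_of_monotone_transport_to_gaussian_general d V hVpos hV1 A hA hV2 φ hφconv hφ1 hpush
end

section
/- Let d ≥ 1, let V, W : ℝ^d → ℝ be positive functions, let φ : ℝ^d → ℝ be a convex function of class C², and let F(S) := (det S)^{1/d} on symmetric positive semidefinite matrices. Fix ε > 0, a unit vector ē, a point x̄, and δ ∈ ℝ, and assume: ∇φ(x̄+εē) + ∇φ(x̄−εē) = 2∇φ(x̄); ∇φ(x̄+εē) − ∇φ(x̄−εē) = 2δē; D²φ(x̄+εē) + D²φ(x̄−εē) ≤ 2D²φ(x̄) as symmetric matrices; and F(D²φ(x)) = W(∇φ(x))/V(x) at the three points x ∈ {x̄, x̄+εē, x̄−εē}. Then, writing ȳ := ∇φ(x̄), h^α(z,e) := h(z+αe)+h(z−αe)−2h(z), and Γ^± := (W(ȳ ± δē) − W(ȳ)) · (V(x̄ ± εē) − V(x̄))/V(x̄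 ± εē), one has W^δ(ȳ, ē) ≤ Γ^+ + Γ^− + V(x̄)W(ȳ) · (−1/V)^ε(x̄, ē). -/
/-!
Write `F(T) = (det T)^{1/d}` for positive operators `T` on `ℝ^d`. By Minkowski's determinant
inequality `F` is superadditive, hence also monotone, so `T₁ + T₂ ≤ 2 T₀` gives
`F(T₁) + F(T₂) ≤ 2 F(T₀)`. The Hessians of the convex `C²` function `φ` are positive operators,
and the hypothesis on them says exactly `D²φ(x̄ + εē) + D²φ(x̄ - εē) ≤ 2 D²φ(x̄)`. The gradient
hypotheses give `∇φ(x̄ ± εē) = ȳ ± δē`, so the Monge–Ampère relation turns the determinant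
inequality into `W(ȳ + δē)/V(x̄ + εē) + W(ȳ - δē)/V(x̄ - εē) ≤ 2 W(ȳ)/V(x̄)`; multiplied by `V(x̄)`
and regrouped, this is the claimed bound.
-/

open scoped RealInnerProductSpace

namespace Matrix.PosSemidef

variable {ι : Type*} [Fintype ι] [DecidableEq ι] {A B : Matrix ι ι ℝ}

theorem det_rpow_le_trace_div_card [Nonempty ι] (hA : A.PosSemidef) :
    A.det ^ ((1 : ℝ) / Fintype.card ι) ≤ A.trace / Fintype.card ι := by
  have h := Real.geom_mean_le_arith_mean Finset.univ (fun _ => (1 : ℝ)) hA.1.eigenvalues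
    (fun _ _ => zero_le_one) (by simp [Fintype.card_pos]) (fun i _ => hA.eigenvalues_nonneg i)
  simpa [hA.1.det_eq_prod_eigenvalues, hA.1.trace_eq_sum_eigenvalues] using h

theorem det_eq_zero_of_det_add_eq_zero (hA : A.PosSemidef) (hB : B.PosSemidef)
    (h : (A + B).det = 0) : A.det = 0 := by
  obtain ⟨v, hv0, hv⟩ := Matrix.exists_mulVec_eq_zero_iff.mpr h
  have hsum : star v ⬝ᵥ A *ᵥ v + star v ⬝ᵥ B *ᵥ v = 0 := by
    rw [← dotProduct_add, ← add_mulVec, hv, dotProduct_zero]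
  have hAv : star v ⬝ᵥ A *ᵥ v = 0 :=
    le_antisymm (by linarith [hB.dotProduct_mulVec_nonneg v]) (hA.dotProduct_mulVec_nonneg v)
  exact Matrix.exists_mulVec_eq_zero_iff.mp ⟨v, hv0, (hA.dotProduct_mulVec_zero_iff v).mp hAv⟩

open scoped MatrixOrder in
/-- Minkowski's determinant inequality. -/
theorem det_rpow_add_le [Nonempty ι] (hA : A.PosSemidef) (hB : B.PosSemidef) :
    A.det ^ ((1 : ℝ) / Fintype.card ι) + B.det ^ ((1 : ℝ) / Fintype.card ι)
      ≤ (A + B).det ^ ((1 : ℝ) / Fintype.card ι) := by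
  set p : ℝ := 1 / Fintype.card ι
  have hp : p ≠ 0 := by positivity
  by_cases hS : (A + B).det = 0
  · rw [hS, hA.det_eq_zero_of_det_add_eq_zero hB hS,
      hB.det_eq_zero_of_det_add_eq_zero hA (by rwa [add_comm]), Real.zero_rpow hp]
    norm_num
  -- normalize `A + B` to the identity by congruence with `R = (A + B)^{-1/2}`
  set Q := CFC.sqrt (A + B)
  have hQQ : Q * Q = A + B := CFC.sqrt_mul_sqrt_self _ (hA.add hB).nonneg
  have hQ : Q.det ≠ 0 := fun h => hS (by rw [← hQQ, det_mul, h, zero_mul])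
  set R := Q⁻¹
  have hRH : Rᴴ = R := by
    rw [conjTranspose_nonsing_inv, (nonneg_iff_posSemidef.mp (CFC.sqrt_nonneg (A + B))).1.eq]
  have hRAR : (R * A * R).PosSemidef := by
    simpa only [hRH] using hA.mul_mul_conjTranspose_same R
  have hRBR : (R * B * R).PosSemidef := by
    simpa only [hRH] using hB.mul_mul_conjTranspose_same R
  have hsum : R * A * R + R * B * R = 1 := by
    rw [← add_mul, ← mul_add, ← hQQ, ← mul_assoc, nonsing_inv_mul _ (isUnit_iff_ne_zero.mpr hQ),
      one_mul, mul_nonsing_inv _ (isUnit_iff_ne_zero.mpr hQ)]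
  have hdet : ∀ M : Matrix ι ι ℝ, (A + B).det * (R * M * R).det = M.det := by
    intro M
    rw [det_mul, det_mul, det_nonsing_inv, ← hQQ, det_mul, Ring.inverse_eq_inv]
    field_simp
  have hnorm : (R * A * R).det ^ p + (R * B * R).det ^ p ≤ 1 := by
    calc (R * A * R).det ^ p + (R * B * R).det ^ p
        ≤ (R * A * R).trace / Fintype.card ι + (R * B * R).trace / Fintype.card ι :=
          add_le_add hRAR.det_rpow_le_trace_div_card hRBR.det_rpow_le_trace_div_card
      _ = 1 := by
          rw [← add_div, ← trace_add, hsum, trace_one]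
          field_simp
  have hS0 : 0 ≤ (A + B).det := (hA.add hB).det_nonneg
  calc A.det ^ p + B.det ^ p
      = (A + B).det ^ p * ((R * A * R).det ^ p + (R * B * R).det ^ p) := by
        rw [mul_add, ← Real.mul_rpow hS0 hRAR.det_nonneg, ← Real.mul_rpow hS0 hRBR.det_nonneg,
          hdet, hdet]
    _ ≤ (A + B).det ^ p := mul_le_of_le_one_right (by positivity) hnorm

end Matrix.PosSemidef

namespace LinearMap

variable {E : Type*} [NormedAddCommGroup E] [InnerProductSpace ℝ E] [FiniteDimensional ℝ E]
  {T S T₀ : E →ₗ[ℝ] E}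

open Module

theorem IsPositive.det_nonneg (hT : T.IsPositive) : 0 ≤ LinearMap.det T := by
  rw [← LinearMap.det_toMatrix (stdOrthonormalBasis ℝ E).toBasis]
  exact ((posSemidef_toMatrix_iff (stdOrthonormalBasis ℝ E)).mpr hT).det_nonneg

theorem IsPositive.det_rpow_add_le (hE : 0 < finrank ℝ E) (hT : T.IsPositive)
    (hS : S.IsPositive) :
    LinearMap.det T ^ ((1 : ℝ) / finrank ℝ E) + LinearMap.det S ^ ((1 : ℝ) / finrank ℝ E)
      ≤ LinearMap.det (T + S) ^ ((1 : ℝ) / finrank ℝ E) := by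
  let b := stdOrthonormalBasis ℝ E
  have : Nonempty (Fin (finrank ℝ E)) := Fin.pos_iff_nonempty.mp hE
  have h := ((posSemidef_toMatrix_iff b).mpr hT).det_rpow_add_le
    ((posSemidef_toMatrix_iff b).mpr hS)
  rwa [Fintype.card_fin, ← map_add, LinearMap.det_toMatrix, LinearMap.det_toMatrix,
    LinearMap.det_toMatrix] at h

theorem det_rpow_add_le_two_mul_of_add_le (hE : 0 < finrank ℝ E) (hT : T.IsPositive)
    (hS : S.IsPositive) (h : T + S ≤ (2 : ℝ) • T₀) :
    LinearMap.det T ^ ((1 : ℝ) / finrank ℝ E) + LinearMap.det S ^ ((1 : ℝ) / finrank ℝ E)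
      ≤ 2 * LinearMap.det T₀ ^ ((1 : ℝ) / finrank ℝ E) := by
  set p : ℝ := 1 / finrank ℝ E
  have hC : ((2 : ℝ) • T₀ - (T + S)).IsPositive := h
  have h2T₀ : ((2 : ℝ) • T₀).IsPositive :=
    add_sub_cancel (T + S) ((2 : ℝ) • T₀) ▸ (hT.add hS).add hC
  have hT₀ : 0 ≤ LinearMap.det T₀ := by
    have := h2T₀.det_nonneg
    rwa [LinearMap.det_smul, mul_nonneg_iff_of_pos_left (by positivity)] at this
  calc LinearMap.det T ^ p + LinearMap.det S ^ p
      ≤ LinearMap.det (T + S) ^ p := hT.det_rpow_add_le hE hS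
    _ ≤ LinearMap.det (T + S) ^ p + LinearMap.det ((2 : ℝ) • T₀ - (T + S)) ^ p :=
        le_add_of_nonneg_right (Real.rpow_nonneg hC.det_nonneg p)
    _ ≤ LinearMap.det ((2 : ℝ) • T₀) ^ p := by
        have := (hT.add hS).det_rpow_add_le hE hC
        rwa [add_sub_cancel] at this
    _ = 2 * LinearMap.det T₀ ^ p := by
        rw [LinearMap.det_smul, Real.mul_rpow (by positivity) hT₀, ← Real.rpow_natCast,
          ← Real.rpow_mul zero_le_two, mul_one_div_cancel (by positivity), Real.rpow_one]

end LinearMap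

section Hessian

variable {E : Type*}

theorem ConvexOn.fderiv_fderiv_apply_self_nonneg [NormedAddCommGroup E] [NormedSpace ℝ E]
    {φ : E → ℝ} (hconv : ConvexOn ℝ Set.univ φ) (hφ : Differentiable ℝ φ) {x : E}
    (hx : DifferentiableAt ℝ (fderiv ℝ φ) x) (v : E) :
    0 ≤ fderiv ℝ (fderiv ℝ φ) x v v := by
  have hline : ∀ t : ℝ, HasDerivAt (fun s : ℝ => x + s • v) v t := fun t => by
    simpa using ((hasDerivAt_id t).smul_const v).const_add x
  have hslice : ∀ t : ℝ, HasDerivAt (fun s : ℝ => φ (x + s • v)) (fderiv ℝ φ (x + t • v) v) t :=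
    fun t => (hφ _).hasFDerivAt.comp_hasDerivAt t (hline t)
  have hslice_convex : ConvexOn ℝ Set.univ fun s : ℝ => φ (x + s • v) := by
    have hslice_eq : (fun s : ℝ => φ (x + s • v)) = φ ∘ AffineMap.lineMap x (x + v) := by
      ext s
      simp [AffineMap.lineMap_apply, add_comm]
    exact hslice_eq ▸ hconv.comp_affineMap _
  have hmono : Monotone fun t : ℝ => fderiv ℝ φ (x + t • v) v := by
    have := hslice_convex.monotoneOn_deriv fun t _ => (hslice t).differentiableAt
    rwa [funext fun t => (hslice t).deriv, monotoneOn_univ] at this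
  have hderiv : HasDerivAt (fun t : ℝ => fderiv ℝ φ (x + t • v) v)
      (fderiv ℝ (fderiv ℝ φ) x v v) 0 := by
    have hx' : HasFDerivAt (fderiv ℝ φ) (fderiv ℝ (fderiv ℝ φ) x) (x + (0 : ℝ) • v) := by
      simpa using hx.hasFDerivAt
    exact (ContinuousLinearMap.apply ℝ ℝ v).hasFDerivAt.comp_hasDerivAt 0
      (hx'.comp_hasDerivAt 0 (hline 0))
  simpa only [hderiv.deriv] using hmono.deriv_nonneg (x := 0)

variable [NormedAddCommGroup E] [InnerProductSpace ℝ E] [CompleteSpace E] {φ : E → ℝ}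

theorem inner_fderiv_gradient_apply (x u v : E) :
    ⟪fderiv ℝ (gradient φ) x u, v⟫ = fderiv ℝ (fderiv ℝ φ) x u v := by
  change ⟪fderiv ℝ ((InnerProductSpace.toDual ℝ E).symm ∘ fderiv ℝ φ) x u, v⟫ = _
  rw [LinearIsometryEquiv.comp_fderiv]
  exact InnerProductSpace.toDual_symm_apply

theorem ConvexOn.isPositive_fderiv_gradient (hconv : ConvexOn ℝ Set.univ φ)
    (hφ : ContDiff ℝ 2 φ) (x : E) : (fderiv ℝ (gradient φ) x : E →ₗ[ℝ] E).IsPositive := by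
  refine (LinearMap.isPositive_iff _).mpr ⟨fun u v => ?_, fun v => ?_⟩
  · simp only [ContinuousLinearMap.coe_coe]
    rw [real_inner_comm _ u, inner_fderiv_gradient_apply, inner_fderiv_gradient_apply]
    exact hφ.contDiffAt.isSymmSndFDerivAt (by simp) u v
  · simp only [ContinuousLinearMap.coe_coe]
    rw [inner_fderiv_gradient_apply]
    exact hconv.fderiv_fderiv_apply_self_nonneg (hφ.differentiable (by simp))
      ((hφ.fderiv_right (m := 1) (by norm_num)).differentiable (by simp) x) v

end Hessian

theorem add_sub_two_mul_le_of_div_add_div_le {a b w p q r : ℝ} (hp : 0 < p) (hq : 0 < q)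
    (hr : 0 < r) (h : a / p + b / q ≤ 2 * (w / r)) :
    a + b - 2 * w ≤ (a - w) * ((p - r) / p) + (b - w) * ((q - r) / q)
      + r * w * (-1 / p + -1 / q - 2 * (-1 / r)) := by
  have hrhs : (a - w) * ((p - r) / p) + (b - w) * ((q - r) / q)
      + r * w * (-1 / p + -1 / q - 2 * (-1 / r)) - (a + b - 2 * w)
      = r * (2 * (w / r) - (a / p + b / q)) := by
    field_simp
    ring
  linarith [mul_nonneg hr.le (sub_nonneg.mpr h)]

theorem discrete_incremental_ratio_inequality_general
    (d : ℕ) (hd : 1 ≤ d)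
    (V W : EuclideanSpace ℝ (Fin d) → ℝ)
    (hVpos : ∀ x, 0 < V x)
    (φ : EuclideanSpace ℝ (Fin d) → ℝ)
    (hφconv : ConvexOn ℝ Set.univ φ) (hφ2 : ContDiff ℝ 2 φ)
    (ε δ : ℝ)
    (ebar xbar : EuclideanSpace ℝ (Fin d))
    (h1 : gradient φ (xbar + ε • ebar) + gradient φ (xbar - ε • ebar)
      = (2 : ℝ) • gradient φ xbar)
    (h2 : gradient φ (xbar + ε • ebar) - gradient φ (xbar - ε • ebar)
      = (2 * δ) • ebar)
    (h3 : ∀ v, ⟪fderiv ℝ (fun y => gradient φ y) (xbar + ε • ebar) v, v⟫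
        + ⟪fderiv ℝ (fun y => gradient φ y) (xbar - ε • ebar) v, v⟫
      ≤ 2 * ⟪fderiv ℝ (fun y => gradient φ y) xbar v, v⟫)
    (hMA : ∀ x ∈ ({xbar, xbar + ε • ebar, xbar - ε • ebar} :
        Set (EuclideanSpace ℝ (Fin d))),
      (LinearMap.det (fderiv ℝ (fun y => gradient φ y) x).toLinearMap)
        ^ ((1 : ℝ) / d) = W (gradient φ x) / V x) :
    W (gradient φ xbar + δ • ebar) + W (gradient φ xbar - δ • ebar)
        - 2 * W (gradient φ xbar)
      ≤ (W (gradient φ xbar + δ • ebar) - W (gradient φ xbar))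
            * ((V (xbar + ε • ebar) - V xbar) / V (xbar + ε • ebar))
        + (W (gradient φ xbar - δ • ebar) - W (gradient φ xbar))
            * ((V (xbar - ε • ebar) - V xbar) / V (xbar - ε • ebar))
        + V xbar * W (gradient φ xbar)
            * ((-1 / V (xbar + ε • ebar)) + (-1 / V (xbar - ε • ebar))
                - 2 * (-1 / V xbar)) := by
  have hgrad_add : gradient φ (xbar + ε • ebar) = gradient φ xbar + δ • ebar := by
    linear_combination (norm := module) (1 / 2 : ℝ) • h1 + (1 / 2 : ℝ) • h2
  have hgrad_sub : gradient φ (xbar - ε • ebar) = gradient φ xbar - δ • ebar := by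
    linear_combination (norm := module) (1 / 2 : ℝ) • h1 - (1 / 2 : ℝ) • h2
  let H x : EuclideanSpace ℝ (Fin d) →ₗ[ℝ] EuclideanSpace ℝ (Fin d) := fderiv ℝ (gradient φ) x
  have hH x : (H x).IsPositive := hφconv.isPositive_fderiv_gradient hφ2 x
  have hle : H (xbar + ε • ebar) + H (xbar - ε • ebar) ≤ (2 : ℝ) • H xbar := by
    refine (LinearMap.isPositive_iff _).mpr
      ⟨((hH _).isSymmetric.smul rfl).sub ((hH _).isSymmetric.add (hH _).isSymmetric), fun v => ?_⟩
    simp only [H, LinearMap.sub_apply, LinearMap.add_apply, LinearMap.smul_apply,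
      ContinuousLinearMap.coe_coe, inner_sub_left, inner_add_left, real_inner_smul_left]
    linarith [h3 v]
  have key := LinearMap.det_rpow_add_le_two_mul_of_add_le
    (by rwa [finrank_euclideanSpace_fin]) (hH _) (hH _) hle
  rw [finrank_euclideanSpace_fin, hMA _ (by simp), hMA _ (by simp), hMA _ (by simp),
    hgrad_add, hgrad_sub] at key
  exact add_sub_two_mul_le_of_div_add_div_le (hVpos _) (hVpos _) (hVpos _) key

/-- The crucial discrete inequality (3.16) on second-order incremental ratios,
obtained from the concavity of `S ↦ (det S)^{1/d}`. -/
theorem discrete_incremental_ratio_inequality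
    (d : ℕ) (hd : 1 ≤ d)
    (V W : EuclideanSpace ℝ (Fin d) → ℝ)
    (hVpos : ∀ x, 0 < V x) (hWpos : ∀ y, 0 < W y)
    (φ : EuclideanSpace ℝ (Fin d) → ℝ)
    (hφconv : ConvexOn ℝ Set.univ φ) (hφ2 : ContDiff ℝ 2 φ)
    (ε δ : ℝ) (hε : 0 < ε)
    (ebar xbar : EuclideanSpace ℝ (Fin d)) (hebar : ‖ebar‖ = 1)
    (h1 : gradient φ (xbar + ε • ebar) + gradient φ (xbar - ε • ebar)
      = (2 : ℝ) • gradient φ xbar)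
    (h2 : gradient φ (xbar + ε • ebar) - gradient φ (xbar - ε • ebar)
      = (2 * δ) • ebar)
    (h3 : ∀ v, ⟪fderiv ℝ (fun y => gradient φ y) (xbar + ε • ebar) v, v⟫
        + ⟪fderiv ℝ (fun y => gradient φ y) (xbar - ε • ebar) v, v⟫
      ≤ 2 * ⟪fderiv ℝ (fun y => gradient φ y) xbar v, v⟫)
    (hMA : ∀ x ∈ ({xbar, xbar + ε • ebar, xbar - ε • ebar} :
        Set (EuclideanSpace ℝ (Fin d))),
      (LinearMap.det (fderiv ℝ (fun y => gradient φ y) x).toLinearMap)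
        ^ ((1 : ℝ) / d) = W (gradient φ x) / V x) :
    W (gradient φ xbar + δ • ebar) + W (gradient φ xbar - δ • ebar)
        - 2 * W (gradient φ xbar)
      ≤ (W (gradient φ xbar + δ • ebar) - W (gradient φ xbar))
            * ((V (xbar + ε • ebar) - V xbar) / V (xbar + ε • ebar))
        + (W (gradient φ xbar - δ • ebar) - W (gradient φ xbar))
            * ((V (xbar - ε • ebar) - V xbar) / V (xbar - ε • ebar))
        + V xbar * W (gradient φ xbar)
            * ((-1 / V (xbar + ε • ebar)) + (-1 / V (xbar - ε • ebar))
                - 2 * (-1 / V xbar)) :=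
  discrete_incremental_ratio_inequality_general d hd V W hVpos φ hφconv hφ2 ε δ ebar xbar h1 h2 h3
    hMA
end

section
/- Let d ≥ 1, p > 1, λ > 0, and let W : ℝ^d → ℝ be a function of class C² with D²W(x) ≥ λ⟨x⟩^{p−2} Id for all x ∈ ℝ^d. Then there exists a constant c > 0 (depending only on λ and p) such that for all y ∈ ℝ^d: ⟨y⟩|∇W(y)| ≥ ∇W(y)·y ≥ W(y) − W(0) + c(⟨y⟩^p − 1). -/
open scoped RealInnerProductSpace
open Set

/-! Along the ray `t ↦ t • y`, with `φ t = W (t • y)`, the function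
`t φ'(t) - φ(t) - (λ/p) ⟨t y⟩^p` has derivative `t φ''(t) - λ t |y|² ⟨t y⟩^(p-2)`, which the
Hessian bound makes nonnegative on `[0, 1]`; comparing its values at `0` and `1` gives the lower
bound with `c = λ/p`. The upper bound is Cauchy–Schwarz together with `|y| ≤ ⟨y⟩`. -/

theorem sub_add_sub_le_of_le_mul_secondDeriv {φ φ' φ'' g g' : ℝ → ℝ}
    (hφ : ∀ t, HasDerivAt φ (φ' t) t) (hφ' : ∀ t, HasDerivAt φ' (φ'' t) t)
    (hg : ∀ t, HasDerivAt g (g' t) t) (hle : ∀ t ∈ Ioo (0 : ℝ) 1, g' t ≤ t * φ'' t) :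
    φ 1 - φ 0 + (g 1 - g 0) ≤ φ' 1 := by
  set F : ℝ → ℝ := fun t => t * φ' t - φ t - g t
  have hF : ∀ t, HasDerivAt F (t * φ'' t - g' t) t := fun t =>
    ((((hasDerivAt_id' t).mul (hφ' t)).sub (hφ t)).sub (hg t)).congr_deriv (by ring)
  have hmono : MonotoneOn F (Icc 0 1) := by
    refine monotoneOn_of_hasDerivWithinAt_nonneg (convex_Icc 0 1)
      (fun t _ => (hF t).continuousAt.continuousWithinAt) (fun t _ => (hF t).hasDerivWithinAt)
      fun t ht => ?_
    rw [interior_Icc] at ht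
    exact sub_nonneg.mpr (hle t ht)
  have := hmono (left_mem_Icc.mpr zero_le_one) (right_mem_Icc.mpr zero_le_one) zero_le_one
  simp only [F, zero_mul, one_mul] at this
  linarith

section InnerProductSpace

variable {E : Type*} [NormedAddCommGroup E] [InnerProductSpace ℝ E]

theorem real_inner_le_sqrt_one_add_sq_mul_norm (g y : E) :
    ⟪g, y⟫ ≤ Real.sqrt (1 + ‖y‖ ^ 2) * ‖g‖ := by
  have hy : ‖y‖ ≤ Real.sqrt (1 + ‖y‖ ^ 2) :=
    Real.le_sqrt_of_sq_le (by linarith)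
  calc ⟪g, y⟫ ≤ ‖g‖ * ‖y‖ := real_inner_le_norm g y
    _ ≤ ‖g‖ * Real.sqrt (1 + ‖y‖ ^ 2) := by gcongr
    _ = _ := mul_comm _ _

theorem ContDiff.gradient [CompleteSpace E] {f : E → ℝ} {m n : WithTop ℕ∞} (hf : ContDiff ℝ n f)
    (hmn : m + 1 ≤ n) : ContDiff ℝ m (gradient f) :=
  (InnerProductSpace.toDual ℝ E).symm.contDiff.comp (hf.fderiv_right hmn)

theorem hasDerivAt_comp_smul_of_hasGradientAt [CompleteSpace E] {f : E → ℝ} {f' y : E} {t : ℝ}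
    (hf : HasGradientAt f f' (t • y)) : HasDerivAt (fun s : ℝ => f (s • y)) ⟪f', y⟫ t := by
  simpa [Function.comp_def] using hf.hasFDerivAt.comp_hasDerivAt t ((hasDerivAt_id t).smul_const y)

theorem hasDerivAt_inner_comp_smul {G : E → E} {y : E} {t : ℝ}
    (hG : DifferentiableAt ℝ G (t • y)) :
    HasDerivAt (fun s : ℝ => ⟪G (s • y), y⟫) ⟪fderiv ℝ G (t • y) y, y⟫ t := by
  have := hG.hasFDerivAt.comp_hasDerivAt t ((hasDerivAt_id t).smul_const y)
  simpa using this.inner ℝ (hasDerivAt_const t y)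

theorem sub_add_sub_le_inner_gradient [CompleteSpace E] {W : E → ℝ} (hW : Differentiable ℝ W)
    (hW' : Differentiable ℝ (gradient W)) (y : E) {g g' : ℝ → ℝ}
    (hg : ∀ t, HasDerivAt g (g' t) t)
    (hle : ∀ t ∈ Ioo (0 : ℝ) 1, g' t ≤ t * ⟪fderiv ℝ (gradient W) (t • y) y, y⟫) :
    W y - W 0 + (g 1 - g 0) ≤ ⟪gradient W y, y⟫ := by
  simpa using sub_add_sub_le_of_le_mul_secondDeriv
    (fun t => hasDerivAt_comp_smul_of_hasGradientAt (hW (t • y)).hasGradientAt)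
    (fun t => hasDerivAt_inner_comp_smul (hW' (t • y))) hg hle

end InnerProductSpace

theorem hasDerivAt_sqrt_one_add_sq_mul_rpow (r p t : ℝ) :
    HasDerivAt (fun s => Real.sqrt (1 + s ^ 2 * r ^ 2) ^ p)
      (p * t * r ^ 2 * Real.sqrt (1 + t ^ 2 * r ^ 2) ^ (p - 2)) t := by
  have hpos : 0 < 1 + t ^ 2 * r ^ 2 := by positivity
  have hbase : HasDerivAt (fun s => 1 + s ^ 2 * r ^ 2) (2 * t * r ^ 2) t := by
    simpa using ((hasDerivAt_pow 2 t).mul_const (r ^ 2)).const_add 1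
  convert (hbase.sqrt hpos.ne').rpow_const (p := p) (Or.inl (Real.sqrt_pos.mpr hpos).ne') using 1
  have hs := Real.sqrt_pos.mpr hpos
  rw [show p - 2 = p - 1 - 1 by ring, Real.rpow_sub_one hs.ne']
  field_simp

theorem taylor_radial_lower_bound_general
    (d : ℕ) (p lam : ℝ) (hp : 1 < p) (hlam : 0 < lam)
    (W : EuclideanSpace ℝ (Fin d) → ℝ) (hW2 : ContDiff ℝ 2 W)
    (hWhess : ∀ (x : EuclideanSpace ℝ (Fin d)) (v : EuclideanSpace ℝ (Fin d)),
      lam * Real.sqrt (1 + ‖x‖ ^ 2) ^ (p - 2) * ‖v‖ ^ 2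
        ≤ ⟪fderiv ℝ (fun y => gradient W y) x v, v⟫) :
    ∃ c > 0, ∀ y : EuclideanSpace ℝ (Fin d),
      ⟪gradient W y, y⟫ ≤ Real.sqrt (1 + ‖y‖ ^ 2) * ‖gradient W y‖ ∧
      W y - W 0 + c * (Real.sqrt (1 + ‖y‖ ^ 2) ^ p - 1) ≤ ⟪gradient W y, y⟫ := by
  have hp0 : 0 < p := by linarith
  refine ⟨lam / p, div_pos hlam hp0, fun y =>
    ⟨real_inner_le_sqrt_one_add_sq_mul_norm _ _, ?_⟩⟩
  have hW1 : Differentiable ℝ W := hW2.differentiable two_ne_zero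
  have hW'1 : Differentiable ℝ (gradient W) :=
    (hW2.gradient (m := 1) (by norm_num)).differentiable one_ne_zero
  have key := sub_add_sub_le_inner_gradient hW1 hW'1 y
    (g := fun t => lam / p * Real.sqrt (1 + t ^ 2 * ‖y‖ ^ 2) ^ p)
    (fun t => (hasDerivAt_sqrt_one_add_sq_mul_rpow ‖y‖ p t).const_mul (lam / p))
    fun t ht => by
      have hess := hWhess (t • y) y
      rw [norm_smul, mul_pow, Real.norm_eq_abs, sq_abs] at hess
      calc lam / p * (p * t * ‖y‖ ^ 2 * Real.sqrt (1 + t ^ 2 * ‖y‖ ^ 2) ^ (p - 2))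
          = t * (lam * Real.sqrt (1 + t ^ 2 * ‖y‖ ^ 2) ^ (p - 2) * ‖y‖ ^ 2) := by
            field_simp
        _ ≤ _ := mul_le_mul_of_nonneg_left hess ht.1.le
  simp only [one_pow, one_mul, zero_pow two_ne_zero, zero_mul, add_zero, Real.sqrt_one,
    Real.one_rpow] at key
  linarith

/-- The Taylor-formula estimate (3.18): a lower bound on `∇W(y)·y` for
uniformly convex `W`. -/
theorem taylor_radial_lower_bound
    (d : ℕ) (hd : 1 ≤ d) (p lam : ℝ) (hp : 1 < p) (hlam : 0 < lam)
    (W : EuclideanSpace ℝ (Fin d) → ℝ) (hW2 : ContDiff ℝ 2 W)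
    (hWhess : ∀ (x : EuclideanSpace ℝ (Fin d)) (v : EuclideanSpace ℝ (Fin d)),
      lam * Real.sqrt (1 + ‖x‖ ^ 2) ^ (p - 2) * ‖v‖ ^ 2
        ≤ ⟪fderiv ℝ (fun y => gradient W y) x v, v⟫) :
    ∃ c > 0, ∀ y : EuclideanSpace ℝ (Fin d),
      ⟪gradient W y, y⟫ ≤ Real.sqrt (1 + ‖y‖ ^ 2) * ‖gradient W y‖ ∧
      W y - W 0 + c * (Real.sqrt (1 + ‖y‖ ^ 2) ^ p - 1) ≤ ⟪gradient W y, y⟫ :=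
  taylor_radial_lower_bound_general d p lam hp hlam W hW2 hWhess
end
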